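/- The n = 4 homotopy consistency of the curved L∞-algebra of the flat DFT algebroid for arguments (μ₀, e₁, e₂, f): for all smooth sections e₁, e₂ : ℝ^{2d} → ℝ^{2d} and every smooth function f : ℝ^{2d} → ℝ, SC_Jac(e₁,e₂,Df) + D⟨[[e₁,e₂]],Df⟩ + [[Df,[[e₁,e₂]]]] + D⟨e₂, D⟨e₁,Df⟩⟩ − D⟨e₁, D⟨e₂,Df⟩⟩ − [[[[Df,e₁]],e₂]] + [[[[Df,e₂]],e₁]] = 0. -/

import Mathlib

open scoped BigOperators

noncomputable section

/-- The index involution implementing the O(d,d) metric η with matrix [[0,1],[1,0]]: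
η_{AB} = 1 iff B = σd d A. -/
def σd (d : ℕ) (A : Fin (2*d)) : Fin (2*d) :=
  if h : (A : ℕ) < d then ⟨(A : ℕ) + d, by omega⟩
  else ⟨(A : ℕ) - d, by have := A.isLt; omega⟩

/-- A section of the DFT algebroid bundle over ℝ^{2d}. -/
abbrev Sec (d : ℕ) := (Fin (2*d) → ℝ) → Fin (2*d) → ℝ

/-- Partial derivative ∂_A f at x. -/
def pd {n : ℕ} (f : (Fin n → ℝ) → ℝ) (A : Fin n) (x : Fin n → ℝ) : ℝ :=
  fderiv ℝ f x (Pi.single A 1)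

/-- The pairing ⟨e₁,e₂⟩ = η_{AB} e₁^A e₂^B. -/
def pair {d : ℕ} (e₁ e₂ : Sec d) (x : Fin (2*d) → ℝ) : ℝ :=
  ∑ A, e₁ x A * e₂ x (σd d A)

/-- The derivative D : C^∞ → Γ(L), (Df)^A = (1/2) η^{AB} ∂_B f. -/
def Dsec {d : ℕ} (f : (Fin (2*d) → ℝ) → ℝ) : Sec d :=
  fun x A => (1/2) * pd f (σd d A) x

/-- The flat C-bracket of double field theory. -/
def cbr {d : ℕ} (e₁ e₂ : Sec d) : Sec d := fun x B =>
  (∑ A, e₁ x A * pd (fun y => e₂ y B) A x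
    - (1/2) * ∑ A, e₁ x A * pd (fun y => e₂ y (σd d A)) (σd d B) x)
  - (∑ A, e₂ x A * pd (fun y => e₁ y B) A x
    - (1/2) * ∑ A, e₂ x A * pd (fun y => e₁ y (σd d A)) (σd d B) x)

/-- SC_ρ(e₁,e₂)f = (1/2) η^{BC} ∂_B f η_{AD} (e₁^A ∂_C e₂^D − e₂^A ∂_C e₁^D). -/
def SCrho {d : ℕ} (e₁ e₂ : Sec d) (f : (Fin (2*d) → ℝ) → ℝ) (x : Fin (2*d) → ℝ) : ℝ :=
  (1/2) * ∑ B, pd f B x *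
    ∑ A, (e₁ x A * pd (fun y => e₂ y (σd d A)) (σd d B) x
          - e₂ x A * pd (fun y => e₁ y (σd d A)) (σd d B) x)

/-- The Nijenhuis-type tensor N(e₁,e₂,e₃). -/
def Nform {d : ℕ} (e₁ e₂ e₃ : Sec d) (x : Fin (2*d) → ℝ) : ℝ :=
  (1/3) * (pair (cbr e₁ e₂) e₃ x + pair (cbr e₂ e₃) e₁ x + pair (cbr e₃ e₁) e₂ x)

/-- The Jacobiator of the C-bracket. -/
def Jac {d : ℕ} (e₁ e₂ e₃ : Sec d) : Sec d := fun x B =>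
  cbr (cbr e₁ e₂) e₃ x B + cbr (cbr e₂ e₃) e₁ x B + cbr (cbr e₃ e₁) e₂ x B

/-- SC_Jac(e₁,e₂,e₃) = Jac(e₁,e₂,e₃) − D N(e₁,e₂,e₃). -/
def SCJac {d : ℕ} (e₁ e₂ e₃ : Sec d) : Sec d := fun x B =>
  Jac e₁ e₂ e₃ x B - Dsec (Nform e₁ e₂ e₃) x B

/-! ### auxiliary lemmas -/

lemma sig_val (d : ℕ) (A : Fin (2*d)) :
    ((σd d A : Fin (2*d)) : ℕ) = if (A : ℕ) < d then (A : ℕ) + d else (A : ℕ) - d := by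
  unfold σd; split_ifs <;> rfl

lemma sigsig (d : ℕ) (A : Fin (2*d)) : σd d (σd d A) = A := by
  have hA := A.isLt
  apply Fin.ext
  rw [sig_val, sig_val]
  split_ifs <;> omega

section pdLemmas
variable {n : ℕ} {f g : (Fin n → ℝ) → ℝ} {A B : Fin n} {x : Fin n → ℝ}

lemma pd_neg : pd (fun y => -(f y)) A x = - pd f A x := by
  simp [pd, fderiv_neg]

lemma pd_add (hf : DifferentiableAt ℝ f x) (hg : DifferentiableAt ℝ g x) :
    pd (fun y => f y + g y) A x = pd f A x + pd g A x := by
  simp [pd, fderiv_fun_add hf hg]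

lemma pd_sub (hf : DifferentiableAt ℝ f x) (hg : DifferentiableAt ℝ g x) :
    pd (fun y => f y - g y) A x = pd f A x - pd g A x := by
  simp [pd, fderiv_fun_sub hf hg]

lemma pd_const_mul (c : ℝ) (hf : DifferentiableAt ℝ f x) :
    pd (fun y => c * f y) A x = c * pd f A x := by
  simp [pd, fderiv_const_mul hf]

lemma pd_mul (hf : DifferentiableAt ℝ f x) (hg : DifferentiableAt ℝ g x) :
    pd (fun y => f y * g y) A x = pd f A x * g x + f x * pd g A x := by
  simp [pd, fderiv_fun_mul hf hg]; ring

lemma pd_sum {ι : Type*} (s : Finset ι) (F : ι → (Fin n → ℝ) → ℝ)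
    (hF : ∀ i ∈ s, DifferentiableAt ℝ (F i) x) :
    pd (fun y => ∑ i ∈ s, F i y) A x = ∑ i ∈ s, pd (F i) A x := by
  simp only [pd]
  rw [fderiv_fun_sum hF]
  simp

lemma ContDiff.pd' (hf : ContDiff ℝ (⊤ : ℕ∞) f) (A : Fin n) : ContDiff ℝ (⊤ : ℕ∞) (pd f A) := by
  unfold pd
  exact (hf.fderiv_right (by simp)).clm_apply contDiff_const

lemma pd_comm (hf : ContDiff ℝ (⊤ : ℕ∞) f) : pd (pd f A) B x = pd (pd f B) A x := by
  have hsymm : IsSymmSndFDerivAt ℝ f x := hf.contDiffAt.isSymmSndFDerivAt (by rw [minSmoothness_of_isRCLikeNormedField]; exact WithTop.coe_le_coe.2 le_top)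
  have hd : DifferentiableAt ℝ (fderiv ℝ f) x :=
    ((hf.fderiv_right (m := 1) (WithTop.coe_le_coe.2 le_top)).differentiable one_ne_zero).differentiableAt
  have key : ∀ v w : Fin n → ℝ,
      fderiv ℝ (fun y => fderiv ℝ f y v) x w = fderiv ℝ (fderiv ℝ f) x w v := by
    intro v w
    rw [fderiv_clm_apply hd (differentiableAt_const v)]
    simp
  show fderiv ℝ (fun y => fderiv ℝ f y (Pi.single A 1)) x (Pi.single B 1)
      = fderiv ℝ (fun y => fderiv ℝ f y (Pi.single B 1)) x (Pi.single A 1)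
  rw [key, key, hsymm]

end pdLemmas

section sumLemmas
variable {ι : Type*} [Fintype ι]

lemma sum_invol (s : ι → ι) (hs : ∀ a, s (s a) = a) (g : ι → ℝ) :
    ∑ a, g (s a) = ∑ a, g a :=
  Equiv.sum_comp (⟨s, s, hs, hs⟩ : ι ≃ ι) g

lemma dsum_swap (F : ι → ι → ℝ) : ∑ c, ∑ a, F a c = ∑ c, ∑ a, F c a := Finset.sum_comm

lemma dsum_congr {F G : ι → ι → ℝ} (h : ∀ a c, F a c = G a c) :
    ∑ c, ∑ a, F a c = ∑ c, ∑ a, G a c :=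
  Finset.sum_congr rfl fun c _ => Finset.sum_congr rfl fun a _ => h a c

lemma dsum_sA (s : ι → ι) (hs : ∀ a, s (s a) = a) (F : ι → ι → ℝ) :
    ∑ c, ∑ a, F (s a) c = ∑ c, ∑ a, F a c :=
  Finset.sum_congr rfl fun c _ => sum_invol s hs (fun a => F a c)

lemma dsum_sC (s : ι → ι) (hs : ∀ a, s (s a) = a) (F : ι → ι → ℝ) :
    ∑ c, ∑ a, F a (s c) = ∑ c, ∑ a, F a c :=
  sum_invol s hs (fun c => ∑ a, F a c)

lemma dsum_reindex (s : ι → ι) (hs : ∀ a, s (s a) = a) (F : ι → ι → ℝ) :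
    ∑ c, ∑ a, F a c = ∑ c, ∑ a, F (s a) (s c) := by
  conv_rhs => rw [dsum_sA s hs (fun a c => F a (s c)), dsum_sC s hs F]

lemma dsum_cmul (c : ℝ) (F : ι → ι → ℝ) :
    ∑ C, ∑ A, c * F A C = c * (∑ C, ∑ A, F A C) := by
  rw [Finset.mul_sum]
  exact Finset.sum_congr rfl fun C _ => (Finset.mul_sum _ _ _).symm

lemma hbr (a1 a2 a3 a4 : ι → ℝ) (c : ℝ) :
    ((∑ A, a1 A) - 1/2 * (∑ A, a2 A) - ((∑ A, a3 A) - 1/2 * (∑ A, a4 A))) * c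
    = ∑ A, (a1 A * c - 1/2 * (a2 A * c) - a3 A * c + 1/2 * (a4 A * c)) := by
  rw [Finset.mul_sum, Finset.mul_sum, ← Finset.sum_sub_distrib, ← Finset.sum_sub_distrib,
    ← Finset.sum_sub_distrib, Finset.sum_mul]
  exact Finset.sum_congr rfl fun A _ => by ring

end sumLemmas

section bigIdSec
variable {ι : Type*} [Fintype ι]

lemma hbr2 (g : ι → ℝ) (c : ℝ) : c * (1/2 * ∑ A, g A) = ∑ A, c * (1/2 * g A) := by
  rw [Finset.mul_sum, Finset.mul_sum]

lemma bigId (s : ι → ι) (hs : ∀ a, s (s a) = a)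
    (E1 E2 P : ι → ℝ) (dE1 dE2 Q : ι → ι → ℝ)
    (hQ : ∀ a b, Q a b = Q b a) :
    (∑ C, (((∑ A, E1 A * dE2 A C) - 1/2 * ∑ A, E1 A * dE2 (s C) (s A))
        - ((∑ A, E2 A * dE1 A C) - 1/2 * ∑ A, E2 A * dE1 (s C) (s A))) * (1/2 * P C))
    - 1/3 * (
      (∑ C, (((∑ A, E1 A * dE2 A C) - 1/2 * ∑ A, E1 A * dE2 (s C) (s A))
        - ((∑ A, E2 A * dE1 A C) - 1/2 * ∑ A, E2 A * dE1 (s C) (s A))) * (1/2 * P C))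
      + (∑ C, (((∑ A, E2 A * (1/2 * Q (s C) A)) - 1/2 * ∑ A, E2 A * (1/2 * Q A (s C)))
        - ((∑ A, 1/2 * P (s A) * dE2 A C) - 1/2 * ∑ A, 1/2 * P (s A) * dE2 (s C) (s A))) * E1 (s C))
      + (∑ C, (((∑ A, 1/2 * P (s A) * dE1 A C) - 1/2 * ∑ A, 1/2 * P (s A) * dE1 (s C) (s A))
        - ((∑ A, E1 A * (1/2 * Q (s C) A)) - 1/2 * ∑ A, E1 A * (1/2 * Q A (s C)))) * E2 (s C)))
    + (∑ C, E2 C * (1/2 * ∑ A, (dE1 C A * (1/2 * P A) + E1 A * (1/2 * Q A C))))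
    - (∑ C, E1 C * (1/2 * ∑ A, (dE2 C A * (1/2 * P A) + E2 A * (1/2 * Q A C))))
    = 0 := by
  have hB1 : (∑ C, (((∑ A, E1 A * dE2 A C) - 1/2 * ∑ A, E1 A * dE2 (s C) (s A))
        - ((∑ A, E2 A * dE1 A C) - 1/2 * ∑ A, E2 A * dE1 (s C) (s A))) * (1/2 * P C))
      = ∑ C, ∑ A, (E1 A * dE2 A C * (1/2 * P C) - 1/2 * (E1 A * dE2 (s C) (s A) * (1/2 * P C))
          - E2 A * dE1 A C * (1/2 * P C) + 1/2 * (E2 A * dE1 (s C) (s A) * (1/2 * P C))) :=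
    Finset.sum_congr rfl fun C _ => hbr _ _ _ _ _
  have hB2 : (∑ C, (((∑ A, E2 A * (1/2 * Q (s C) A)) - 1/2 * ∑ A, E2 A * (1/2 * Q A (s C)))
        - ((∑ A, 1/2 * P (s A) * dE2 A C) - 1/2 * ∑ A, 1/2 * P (s A) * dE2 (s C) (s A))) * E1 (s C))
      = ∑ C, ∑ A, (E2 A * (1/2 * Q (s C) A) * E1 (s C) - 1/2 * (E2 A * (1/2 * Q A (s C)) * E1 (s C))
          - 1/2 * P (s A) * dE2 A C * E1 (s C) + 1/2 * (1/2 * P (s A) * dE2 (s C) (s A) * E1 (s C))) :=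
    Finset.sum_congr rfl fun C _ => hbr _ _ _ _ _
  have hB3 : (∑ C, (((∑ A, 1/2 * P (s A) * dE1 A C) - 1/2 * ∑ A, 1/2 * P (s A) * dE1 (s C) (s A))
        - ((∑ A, E1 A * (1/2 * Q (s C) A)) - 1/2 * ∑ A, E1 A * (1/2 * Q A (s C)))) * E2 (s C))
      = ∑ C, ∑ A, (1/2 * P (s A) * dE1 A C * E2 (s C) - 1/2 * (1/2 * P (s A) * dE1 (s C) (s A) * E2 (s C))
          - E1 A * (1/2 * Q (s C) A) * E2 (s C) + 1/2 * (E1 A * (1/2 * Q A (s C)) * E2 (s C))) :=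
    Finset.sum_congr rfl fun C _ => hbr _ _ _ _ _
  have hB4 : (∑ C, E2 C * (1/2 * ∑ A, (dE1 C A * (1/2 * P A) + E1 A * (1/2 * Q A C))))
      = ∑ C, ∑ A, E2 C * (1/2 * (dE1 C A * (1/2 * P A) + E1 A * (1/2 * Q A C))) :=
    Finset.sum_congr rfl fun C _ => hbr2 _ _
  have hB5 : (∑ C, E1 C * (1/2 * ∑ A, (dE2 C A * (1/2 * P A) + E2 A * (1/2 * Q A C))))
      = ∑ C, ∑ A, E1 C * (1/2 * (dE2 C A * (1/2 * P A) + E2 A * (1/2 * Q A C))) :=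
    Finset.sum_congr rfl fun C _ => hbr2 _ _
  rw [hB1, hB2, hB3, hB4, hB5]
  simp only [Finset.sum_sub_distrib, Finset.sum_add_distrib, mul_add, Finset.mul_sum]

  -- canonical conversions
  have g1 : (∑ C, ∑ A, E1 A * dE2 A C * (1/2 * P C))
      = 1/2 * (∑ C, ∑ A, P C * (E1 A * dE2 A C)) :=
    calc (∑ C, ∑ A, E1 A * dE2 A C * (1/2 * P C))
        = ∑ C, ∑ A, 1/2 * (P C * (E1 A * dE2 A C)) := dsum_congr fun a c => by ring
      _ = 1/2 * (∑ C, ∑ A, P C * (E1 A * dE2 A C)) := dsum_cmul _ _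
  have g3 : (∑ C, ∑ A, E2 A * dE1 A C * (1/2 * P C))
      = 1/2 * (∑ C, ∑ A, P C * (E2 A * dE1 A C)) :=
    calc (∑ C, ∑ A, E2 A * dE1 A C * (1/2 * P C))
        = ∑ C, ∑ A, 1/2 * (P C * (E2 A * dE1 A C)) := dsum_congr fun a c => by ring
      _ = 1/2 * (∑ C, ∑ A, P C * (E2 A * dE1 A C)) := dsum_cmul _ _
  have g2 : (∑ C, ∑ A, 1/2 * (E1 A * dE2 (s C) (s A) * (1/2 * P C)))
      = 1/4 * (∑ C, ∑ A, P (s A) * (E1 (s C) * dE2 A C)) :=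
    calc (∑ C, ∑ A, 1/2 * (E1 A * dE2 (s C) (s A) * (1/2 * P C)))
        = ∑ C, ∑ A, 1/2 * (E1 (s A) * dE2 (s (s C)) (s (s A)) * (1/2 * P (s C))) :=
          dsum_reindex s hs (fun a c => 1/2 * (E1 a * dE2 (s c) (s a) * (1/2 * P c)))
      _ = ∑ C, ∑ A, 1/2 * (E1 (s A) * dE2 C A * (1/2 * P (s C))) :=
          dsum_congr fun a c => by simp only [hs]
      _ = ∑ C, ∑ A, 1/2 * (E1 (s C) * dE2 A C * (1/2 * P (s A))) :=
          dsum_swap (fun a c => 1/2 * (E1 (s a) * dE2 c a * (1/2 * P (s c))))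
      _ = ∑ C, ∑ A, 1/4 * (P (s A) * (E1 (s C) * dE2 A C)) := dsum_congr fun a c => by ring
      _ = 1/4 * (∑ C, ∑ A, P (s A) * (E1 (s C) * dE2 A C)) := dsum_cmul _ _
  have g4 : (∑ C, ∑ A, 1/2 * (E2 A * dE1 (s C) (s A) * (1/2 * P C)))
      = 1/4 * (∑ C, ∑ A, P (s A) * (E2 (s C) * dE1 A C)) :=
    calc (∑ C, ∑ A, 1/2 * (E2 A * dE1 (s C) (s A) * (1/2 * P C)))
        = ∑ C, ∑ A, 1/2 * (E2 (s A) * dE1 (s (s C)) (s (s A)) * (1/2 * P (s C))) :=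
          dsum_reindex s hs (fun a c => 1/2 * (E2 a * dE1 (s c) (s a) * (1/2 * P c)))
      _ = ∑ C, ∑ A, 1/2 * (E2 (s A) * dE1 C A * (1/2 * P (s C))) :=
          dsum_congr fun a c => by simp only [hs]
      _ = ∑ C, ∑ A, 1/2 * (E2 (s C) * dE1 A C * (1/2 * P (s A))) :=
          dsum_swap (fun a c => 1/2 * (E2 (s a) * dE1 c a * (1/2 * P (s c))))
      _ = ∑ C, ∑ A, 1/4 * (P (s A) * (E2 (s C) * dE1 A C)) := dsum_congr fun a c => by ring
      _ = 1/4 * (∑ C, ∑ A, P (s A) * (E2 (s C) * dE1 A C)) := dsum_cmul _ _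
  have g5 : (∑ C, ∑ A, 1/3 * (1/2 * (E2 A * dE1 (s C) (s A) * (1/2 * P C))))
      = 1/12 * (∑ C, ∑ A, P (s A) * (E2 (s C) * dE1 A C)) :=
    calc (∑ C, ∑ A, 1/3 * (1/2 * (E2 A * dE1 (s C) (s A) * (1/2 * P C))))
        = ∑ C, ∑ A, 1/3 * (1/2 * (E2 (s A) * dE1 (s (s C)) (s (s A)) * (1/2 * P (s C)))) :=
          dsum_reindex s hs (fun a c => 1/3 * (1/2 * (E2 a * dE1 (s c) (s a) * (1/2 * P c))))
      _ = ∑ C, ∑ A, 1/3 * (1/2 * (E2 (s A) * dE1 C A * (1/2 * P (s C)))) :=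
          dsum_congr fun a c => by simp only [hs]
      _ = ∑ C, ∑ A, 1/3 * (1/2 * (E2 (s C) * dE1 A C * (1/2 * P (s A)))) :=
          dsum_swap (fun a c => 1/3 * (1/2 * (E2 (s a) * dE1 c a * (1/2 * P (s c)))))
      _ = ∑ C, ∑ A, 1/12 * (P (s A) * (E2 (s C) * dE1 A C)) := dsum_congr fun a c => by ring
      _ = 1/12 * (∑ C, ∑ A, P (s A) * (E2 (s C) * dE1 A C)) := dsum_cmul _ _
  have g6 : (∑ C, ∑ A, E2 A * (1/2 * Q (s C) A) * E1 (s C))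
      = 1/2 * (∑ C, ∑ A, E1 C * (E2 A * Q C A)) :=
    calc (∑ C, ∑ A, E2 A * (1/2 * Q (s C) A) * E1 (s C))
        = ∑ C, ∑ A, E2 A * (1/2 * Q C A) * E1 C :=
          dsum_sC s hs (fun a c => E2 a * (1/2 * Q c a) * E1 c)
      _ = ∑ C, ∑ A, 1/2 * (E1 C * (E2 A * Q C A)) := dsum_congr fun a c => by ring
      _ = 1/2 * (∑ C, ∑ A, E1 C * (E2 A * Q C A)) := dsum_cmul _ _
  have g7 : (∑ C, ∑ A, 1/2 * (E2 A * (1/2 * Q A (s C)) * E1 (s C)))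
      = 1/4 * (∑ C, ∑ A, E1 C * (E2 A * Q C A)) :=
    calc (∑ C, ∑ A, 1/2 * (E2 A * (1/2 * Q A (s C)) * E1 (s C)))
        = ∑ C, ∑ A, 1/2 * (E2 A * (1/2 * Q A C) * E1 C) :=
          dsum_sC s hs (fun a c => 1/2 * (E2 a * (1/2 * Q a c) * E1 c))
      _ = ∑ C, ∑ A, 1/4 * (E1 C * (E2 A * Q C A)) :=
          dsum_congr fun a c => by linear_combination (1/4 * E2 a * E1 c) * hQ a c
      _ = 1/4 * (∑ C, ∑ A, E1 C * (E2 A * Q C A)) := dsum_cmul _ _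
  have g8 : (∑ C, ∑ A, 1/2 * P (s A) * dE2 A C * E1 (s C))
      = 1/2 * (∑ C, ∑ A, P (s A) * (E1 (s C) * dE2 A C)) :=
    calc (∑ C, ∑ A, 1/2 * P (s A) * dE2 A C * E1 (s C))
        = ∑ C, ∑ A, 1/2 * (P (s A) * (E1 (s C) * dE2 A C)) := dsum_congr fun a c => by ring
      _ = 1/2 * (∑ C, ∑ A, P (s A) * (E1 (s C) * dE2 A C)) := dsum_cmul _ _
  have g9 : (∑ C, ∑ A, 1/3 * (1/2 * (1/2 * P (s A) * dE2 (s C) (s A) * E1 (s C))))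
      = 1/12 * (∑ C, ∑ A, P C * (E1 A * dE2 A C)) :=
    calc (∑ C, ∑ A, 1/3 * (1/2 * (1/2 * P (s A) * dE2 (s C) (s A) * E1 (s C))))
        = ∑ C, ∑ A, 1/3 * (1/2 * (1/2 * P (s (s A)) * dE2 (s (s C)) (s (s A)) * E1 (s (s C)))) :=
          dsum_reindex s hs (fun a c => 1/3 * (1/2 * (1/2 * P (s a) * dE2 (s c) (s a) * E1 (s c))))
      _ = ∑ C, ∑ A, 1/3 * (1/2 * (1/2 * P A * dE2 C A * E1 C)) :=
          dsum_congr fun a c => by simp only [hs]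
      _ = ∑ C, ∑ A, 1/3 * (1/2 * (1/2 * P C * dE2 A C * E1 A)) :=
          dsum_swap (fun a c => 1/3 * (1/2 * (1/2 * P a * dE2 c a * E1 c)))
      _ = ∑ C, ∑ A, 1/12 * (P C * (E1 A * dE2 A C)) := dsum_congr fun a c => by ring
      _ = 1/12 * (∑ C, ∑ A, P C * (E1 A * dE2 A C)) := dsum_cmul _ _
  have g10 : (∑ C, ∑ A, 1/2 * P (s A) * dE1 A C * E2 (s C))
      = 1/2 * (∑ C, ∑ A, P (s A) * (E2 (s C) * dE1 A C)) :=
    calc (∑ C, ∑ A, 1/2 * P (s A) * dE1 A C * E2 (s C))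
        = ∑ C, ∑ A, 1/2 * (P (s A) * (E2 (s C) * dE1 A C)) := dsum_congr fun a c => by ring
      _ = 1/2 * (∑ C, ∑ A, P (s A) * (E2 (s C) * dE1 A C)) := dsum_cmul _ _
  have g11 : (∑ C, ∑ A, 1/2 * (1/2 * P (s A) * dE1 (s C) (s A) * E2 (s C)))
      = 1/4 * (∑ C, ∑ A, P C * (E2 A * dE1 A C)) :=
    calc (∑ C, ∑ A, 1/2 * (1/2 * P (s A) * dE1 (s C) (s A) * E2 (s C)))
        = ∑ C, ∑ A, 1/2 * (1/2 * P (s (s A)) * dE1 (s (s C)) (s (s A)) * E2 (s (s C))) :=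
          dsum_reindex s hs (fun a c => 1/2 * (1/2 * P (s a) * dE1 (s c) (s a) * E2 (s c)))
      _ = ∑ C, ∑ A, 1/2 * (1/2 * P A * dE1 C A * E2 C) :=
          dsum_congr fun a c => by simp only [hs]
      _ = ∑ C, ∑ A, 1/2 * (1/2 * P C * dE1 A C * E2 A) :=
          dsum_swap (fun a c => 1/2 * (1/2 * P a * dE1 c a * E2 c))
      _ = ∑ C, ∑ A, 1/4 * (P C * (E2 A * dE1 A C)) := dsum_congr fun a c => by ring
      _ = 1/4 * (∑ C, ∑ A, P C * (E2 A * dE1 A C)) := dsum_cmul _ _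
  have g12 : (∑ C, ∑ A, E1 A * (1/2 * Q (s C) A) * E2 (s C))
      = 1/2 * (∑ C, ∑ A, E1 C * (E2 A * Q C A)) :=
    calc (∑ C, ∑ A, E1 A * (1/2 * Q (s C) A) * E2 (s C))
        = ∑ C, ∑ A, E1 A * (1/2 * Q C A) * E2 C :=
          dsum_sC s hs (fun a c => E1 a * (1/2 * Q c a) * E2 c)
      _ = ∑ C, ∑ A, E1 C * (1/2 * Q A C) * E2 A :=
          dsum_swap (fun a c => E1 a * (1/2 * Q c a) * E2 c)
      _ = ∑ C, ∑ A, 1/2 * (E1 C * (E2 A * Q C A)) :=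
          dsum_congr fun a c => by linear_combination (1/2 * E1 c * E2 a) * hQ a c
      _ = 1/2 * (∑ C, ∑ A, E1 C * (E2 A * Q C A)) := dsum_cmul _ _
  have g13 : (∑ C, ∑ A, 1/3 * (1/2 * (E1 A * (1/2 * Q A (s C)) * E2 (s C))))
      = 1/12 * (∑ C, ∑ A, E1 C * (E2 A * Q C A)) :=
    calc (∑ C, ∑ A, 1/3 * (1/2 * (E1 A * (1/2 * Q A (s C)) * E2 (s C))))
        = ∑ C, ∑ A, 1/3 * (1/2 * (E1 A * (1/2 * Q A C) * E2 C)) :=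
          dsum_sC s hs (fun a c => 1/3 * (1/2 * (E1 a * (1/2 * Q a c) * E2 c)))
      _ = ∑ C, ∑ A, 1/3 * (1/2 * (E1 C * (1/2 * Q C A) * E2 A)) :=
          dsum_swap (fun a c => 1/3 * (1/2 * (E1 a * (1/2 * Q a c) * E2 c)))
      _ = ∑ C, ∑ A, 1/12 * (E1 C * (E2 A * Q C A)) := dsum_congr fun a c => by ring
      _ = 1/12 * (∑ C, ∑ A, E1 C * (E2 A * Q C A)) := dsum_cmul _ _
  have g14 : (∑ C, ∑ A, E2 C * (1/2 * (dE1 C A * (1/2 * P A))))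
      = 1/4 * (∑ C, ∑ A, P C * (E2 A * dE1 A C)) :=
    calc (∑ C, ∑ A, E2 C * (1/2 * (dE1 C A * (1/2 * P A))))
        = ∑ C, ∑ A, E2 A * (1/2 * (dE1 A C * (1/2 * P C))) :=
          dsum_swap (fun a c => E2 c * (1/2 * (dE1 c a * (1/2 * P a))))
      _ = ∑ C, ∑ A, 1/4 * (P C * (E2 A * dE1 A C)) := dsum_congr fun a c => by ring
      _ = 1/4 * (∑ C, ∑ A, P C * (E2 A * dE1 A C)) := dsum_cmul _ _
  have g15 : (∑ C, ∑ A, E2 C * (1/2 * (E1 A * (1/2 * Q A C))))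
      = 1/4 * (∑ C, ∑ A, E1 C * (E2 A * Q C A)) :=
    calc (∑ C, ∑ A, E2 C * (1/2 * (E1 A * (1/2 * Q A C))))
        = ∑ C, ∑ A, E2 A * (1/2 * (E1 C * (1/2 * Q C A))) :=
          dsum_swap (fun a c => E2 c * (1/2 * (E1 a * (1/2 * Q a c))))
      _ = ∑ C, ∑ A, 1/4 * (E1 C * (E2 A * Q C A)) := dsum_congr fun a c => by ring
      _ = 1/4 * (∑ C, ∑ A, E1 C * (E2 A * Q C A)) := dsum_cmul _ _
  have g16 : (∑ C, ∑ A, E1 C * (1/2 * (dE2 C A * (1/2 * P A))))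
      = 1/4 * (∑ C, ∑ A, P C * (E1 A * dE2 A C)) :=
    calc (∑ C, ∑ A, E1 C * (1/2 * (dE2 C A * (1/2 * P A))))
        = ∑ C, ∑ A, E1 A * (1/2 * (dE2 A C * (1/2 * P C))) :=
          dsum_swap (fun a c => E1 c * (1/2 * (dE2 c a * (1/2 * P a))))
      _ = ∑ C, ∑ A, 1/4 * (P C * (E1 A * dE2 A C)) := dsum_congr fun a c => by ring
      _ = 1/4 * (∑ C, ∑ A, P C * (E1 A * dE2 A C)) := dsum_cmul _ _
  have g17 : (∑ C, ∑ A, E1 C * (1/2 * (E2 A * (1/2 * Q A C))))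
      = 1/4 * (∑ C, ∑ A, E1 C * (E2 A * Q C A)) :=
    calc (∑ C, ∑ A, E1 C * (1/2 * (E2 A * (1/2 * Q A C))))
        = ∑ C, ∑ A, 1/4 * (E1 C * (E2 A * Q C A)) :=
          dsum_congr fun a c => by linear_combination (1/4 * E1 c * E2 a) * hQ a c
      _ = 1/4 * (∑ C, ∑ A, E1 C * (E2 A * Q C A)) := dsum_cmul _ _
  rw [g1, g2, g3, g4, g5, g6, g7, g8, g9, g10, g11, g12, g13, g14, g15, g16, g17]
  ring

end bigIdSec

end
noncomputable section
lemma scalar_id {d : ℕ} (e₁ e₂ : Sec d) (f : (Fin (2*d) → ℝ) → ℝ)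
    (he₁ : ContDiff ℝ (⊤ : ℕ∞) e₁) (he₂ : ContDiff ℝ (⊤ : ℕ∞) e₂) (hf : ContDiff ℝ (⊤ : ℕ∞) f)
    (y : Fin (2*d) → ℝ) :
    Nform e₁ e₂ (Dsec f) y = pair (cbr e₁ e₂) (Dsec f) y
      + pair e₂ (Dsec (pair e₁ (Dsec f))) y - pair e₁ (Dsec (pair e₂ (Dsec f))) y := by
  have hpdh : ∀ (C A : Fin (2*d)), pd (fun z => 1/2 * pd f C z) A y = 1/2 * pd (pd f C) A y :=
    fun C A => pd_const_mul _ (((hf.pd' C).differentiable (by simp)) y)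
  have hpp1 : ∀ C, pd (pair e₁ (Dsec f)) C y
      = ∑ A, (pd (fun z => e₁ z A) C y * (1/2 * pd f A y) + e₁ y A * (1/2 * pd (pd f A) C y)) := by
    intro C
    have hfun : pair e₁ (Dsec f) = fun z => ∑ A, e₁ z A * (1/2 * pd f A z) := by
      funext z
      exact Finset.sum_congr rfl fun A _ => by rw [Dsec, sigsig]
    rw [hfun, pd_sum _ _ (fun A _ => DifferentiableAt.fun_mul
      (((contDiff_pi.1 he₁ A).differentiable (by simp)) y)
      (((contDiff_const.mul (hf.pd' A)).differentiable (by simp)) y))]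
    refine Finset.sum_congr rfl fun A _ => ?_
    rw [pd_mul (((contDiff_pi.1 he₁ A).differentiable (by simp)) y)
      (((contDiff_const.mul (hf.pd' A)).differentiable (by simp)) y), hpdh]
  have hpp2 : ∀ C, pd (pair e₂ (Dsec f)) C y
      = ∑ A, (pd (fun z => e₂ z A) C y * (1/2 * pd f A y) + e₂ y A * (1/2 * pd (pd f A) C y)) := by
    intro C
    have hfun : pair e₂ (Dsec f) = fun z => ∑ A, e₂ z A * (1/2 * pd f A z) := by
      funext z
      exact Finset.sum_congr rfl fun A _ => by rw [Dsec, sigsig]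
    rw [hfun, pd_sum _ _ (fun A _ => DifferentiableAt.fun_mul
      (((contDiff_pi.1 he₂ A).differentiable (by simp)) y)
      (((contDiff_const.mul (hf.pd' A)).differentiable (by simp)) y))]
    refine Finset.sum_congr rfl fun A _ => ?_
    rw [pd_mul (((contDiff_pi.1 he₂ A).differentiable (by simp)) y)
      (((contDiff_const.mul (hf.pd' A)).differentiable (by simp)) y), hpdh]
  simp only [Nform, pair, cbr, Dsec, sigsig, hpdh, hpp1, hpp2]
  linarith [bigId (σd d) (sigsig d) (fun A => e₁ y A) (fun A => e₂ y A) (fun A => pd f A y)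
    (fun a b => pd (fun z => e₁ z b) a y) (fun a b => pd (fun z => e₂ z b) a y)
    (fun a b => pd (pd f a) b y) (fun a b => pd_comm hf)]

lemma sm_pair {d : ℕ} {a b : Sec d} (ha : ContDiff ℝ (⊤ : ℕ∞) a) (hb : ContDiff ℝ (⊤ : ℕ∞) b) :
    ContDiff ℝ (⊤ : ℕ∞) (pair a b) := by
  unfold pair
  exact ContDiff.sum fun i _ => (contDiff_pi.1 ha i).mul (contDiff_pi.1 hb (σd d i))

lemma sm_Dsec {d : ℕ} {f : (Fin (2*d) → ℝ) → ℝ} (hf : ContDiff ℝ (⊤ : ℕ∞) f) :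
    ContDiff ℝ (⊤ : ℕ∞) (Dsec f : Sec d) :=
  contDiff_pi.2 fun A => by
    simp only [Dsec]
    exact contDiff_const.mul (hf.pd' (σd d A))

lemma sm_cbr {d : ℕ} {a b : Sec d} (ha : ContDiff ℝ (⊤ : ℕ∞) a) (hb : ContDiff ℝ (⊤ : ℕ∞) b) :
    ContDiff ℝ (⊤ : ℕ∞) (cbr a b) :=
  contDiff_pi.2 fun B => by
    simp only [cbr]
    exact ContDiff.sub
      (ContDiff.sub
        (ContDiff.sum fun i _ => (contDiff_pi.1 ha i).mul ((contDiff_pi.1 hb B).pd' i))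
        (contDiff_const.mul (ContDiff.sum fun i _ =>
          (contDiff_pi.1 ha i).mul ((contDiff_pi.1 hb (σd d i)).pd' (σd d B)))))
      (ContDiff.sub
        (ContDiff.sum fun i _ => (contDiff_pi.1 hb i).mul ((contDiff_pi.1 ha B).pd' i))
        (contDiff_const.mul (ContDiff.sum fun i _ =>
          (contDiff_pi.1 hb i).mul ((contDiff_pi.1 ha (σd d i)).pd' (σd d B)))))

/-- The n = 4 homotopy consistency for arguments (μ₀, e₁, e₂, f). -/
theorem homotopy_n4_mu0_e_e_f {d : ℕ} (hd : 1 ≤ d) (e₁ e₂ : Sec d)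
    (f : (Fin (2*d) → ℝ) → ℝ)
    (he₁ : ContDiff ℝ (⊤ : ℕ∞) e₁) (he₂ : ContDiff ℝ (⊤ : ℕ∞) e₂) (hf : ContDiff ℝ (⊤ : ℕ∞) f) :
    ∀ (x : Fin (2*d) → ℝ) (B : Fin (2*d)),
      SCJac e₁ e₂ (Dsec f) x B + Dsec (pair (cbr e₁ e₂) (Dsec f)) x B
        + cbr (Dsec f) (cbr e₁ e₂) x B
        + Dsec (pair e₂ (Dsec (pair e₁ (Dsec f)))) x B
        - Dsec (pair e₁ (Dsec (pair e₂ (Dsec f)))) x B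
        - cbr (cbr (Dsec f) e₁) e₂ x B + cbr (cbr (Dsec f) e₂) e₁ x B = 0 := by
  intro x B
  have hanti : ∀ (a b : Sec d) (x : Fin (2*d) → ℝ) (B : Fin (2*d)),
      cbr a b x B = - cbr b a x B := by
    intros; simp only [cbr]; ring
  have cbr_neg_left : ∀ (k e : Sec d) (x : Fin (2*d) → ℝ) (B : Fin (2*d)),
      cbr (fun y C => -(k y C)) e x B = - cbr k e x B := by
    intros; simp only [cbr, pd_neg, neg_mul, mul_neg, Finset.sum_neg_distrib]; ring
  have hneg2 : cbr (cbr e₂ (Dsec f)) e₁ x B + cbr (cbr (Dsec f) e₂) e₁ x B = 0 := by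
    have h1 : cbr (Dsec f) e₂ = fun y C => -(cbr e₂ (Dsec f) y C) :=
      funext fun y => funext fun C => hanti _ _ y C
    rw [h1, cbr_neg_left]; ring
  -- differentiability of the three scalar functions
  have d1 : DifferentiableAt ℝ (pair (cbr e₁ e₂) (Dsec f)) x :=
    ((sm_pair (sm_cbr he₁ he₂) (sm_Dsec hf)).differentiable (by simp)) x
  have d3 : DifferentiableAt ℝ (pair e₂ (Dsec (pair e₁ (Dsec f)))) x :=
    ((sm_pair he₂ (sm_Dsec (sm_pair he₁ (sm_Dsec hf)))).differentiable (by simp)) x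
  have d4 : DifferentiableAt ℝ (pair e₁ (Dsec (pair e₂ (Dsec f)))) x :=
    ((sm_pair he₁ (sm_Dsec (sm_pair he₂ (sm_Dsec hf)))).differentiable (by simp)) x
  have hkey : Dsec (Nform e₁ e₂ (Dsec f)) x B
      = Dsec (pair (cbr e₁ e₂) (Dsec f)) x B
        + Dsec (pair e₂ (Dsec (pair e₁ (Dsec f)))) x B
        - Dsec (pair e₁ (Dsec (pair e₂ (Dsec f)))) x B := by
    have hfun : Nform e₁ e₂ (Dsec f)
        = fun y => pair (cbr e₁ e₂) (Dsec f) y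
            + pair e₂ (Dsec (pair e₁ (Dsec f))) y - pair e₁ (Dsec (pair e₂ (Dsec f))) y :=
      funext (scalar_id e₁ e₂ f he₁ he₂ hf)
    rw [hfun]
    simp only [Dsec]
    rw [pd_sub (d1.fun_add d3) d4, pd_add d1 d3]
    ring
  simp only [SCJac, Jac]
  have ha1 := hanti (cbr e₁ e₂) (Dsec f) x B
  linarith [hneg2, hkey, ha1]

end
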